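/- If ψ and ψ' are reconciliation maps for the same host–parasite triple (P,H,φ), then for every vertex v of P, the vertices ψ(v) and ψ'(v) are comparable in the ancestor order ⪰_H of H. Consequently, for any finite set {ψ_1,…,ψ_l} of reconciliation maps and any v ∈ V(P), the order ⪰_H restricts to a linear order on {ψ_1(v),…,ψ_l(v)}. -/

import Mathlib

open Classical

namespace Recon

/-- `Anc p u v` : `u` is above or equal to `v` (i.e. `u` is an ancestor of `v`)
with respect to the parent map `p` of a rooted tree. -/
def Anc {V : Type*} (p : V → V) (u v : V) : Prop := ∃ n : ℕ, p^[n] v = u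

/-- `u` is strictly above `v`. -/
def SAnc {V : Type*} (p : V → V) (u v : V) : Prop := Anc p u v ∧ u ≠ v

/-- The length of the (undirected) path between `u` and `v` in the tree with parent map `p`. -/
noncomputable def tdist {V : Type*} (p : V → V) (u v : V) : ℕ :=
  sInf {k : ℕ | ∃ n m : ℕ, n + m = k ∧ p^[n] u = p^[m] v}

/-- `p` is the parent map of a rooted tree on `V` with root `r` and depth function `dp`. -/
structure IsRootedTree {V : Type*} (p : V → V) (r : V) (dp : V → ℕ) : Prop where
  parent_root : p r = r
  depth_root : dp r = 0
  depth_parent : ∀ v, v ≠ r → dp v = dp (p v) + 1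

/-- `v` is a leaf: it has no children. -/
def IsLeaf {V : Type*} (p : V → V) (v : V) : Prop := ∀ u, p u = v → u = v

/-- `u` is a child of `v`. -/
def IsChild {V : Type*} (p : V → V) (u v : V) : Prop := p u = v ∧ u ≠ v

/-- every non-leaf vertex has exactly two children (binary tree). -/
def IsBinary {V : Type*} (p : V → V) : Prop :=
  ∀ v, ¬ IsLeaf p v →
    ∃ u w, u ≠ w ∧ IsChild p u v ∧ IsChild p w v ∧ ∀ z, IsChild p z v → z = u ∨ z = w

/-- `w` is a least common ancestor of the set `S`. -/
def IsLCA {V : Type*} (p : V → V) (S : Set V) (w : V) : Prop :=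
  (∀ s ∈ S, Anc p w s) ∧ ∀ w', (∀ s ∈ S, Anc p w' s) → Anc p w' w

/-- The set `A(v)`: all vertices on the path from the root `r` down to `mv`. -/
def ASet {V : Type*} (p : V → V) (r : V) (mv : V) : Set V :=
  {w | Anc p r w ∧ Anc p w mv}

/-- `ψ` is a reconciliation map for `(P,H,φ)`: it restricts to `φ` on the leaves of `P`,
and the image of a vertex is above or equal to the image of each of its children. -/
def IsRecon {VP VH : Type*} (pP : VP → VP) (pH : VH → VH) (φ ψ : VP → VH) : Prop :=
  (∀ x, IsLeaf pP x → ψ x = φ x) ∧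
  ∀ v v', IsChild pP v' v → Anc pH (ψ v) (ψ v')

/-- The path-distance between two maps `V(P) → V(H)`. -/
noncomputable def dpath {VP VH : Type*} [Fintype VP] (pH : VH → VH) (ψ ψ' : VP → VH) : ℕ :=
  ∑ v : VP, tdist pH (ψ v) (ψ' v)

/-- One edit (up or down) operation transforming `ψ` into `ψ'`. -/
def EditStep {VP VH : Type*} [DecidableEq VP] (pP : VP → VP) (pH : VH → VH) (rH : VH)
    (m : VP → VH) (ψ ψ' : VP → VH) : Prop :=
  ∃ w : VP,
    (ψ w ≠ rH ∧ ψ w ≠ ψ (pP w) ∧ ψ' = Function.update ψ w (pH (ψ w))) ∨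
    (¬ IsLeaf pP w ∧ SAnc pH (ψ w) (m w) ∧ (∀ v', IsChild pP v' w → ψ w ≠ ψ v') ∧
      ∃ c, IsChild pH c (ψ w) ∧ c ∈ ASet pH rH (m w) ∧ ψ' = Function.update ψ w c)

/-- The edit distance: the least number of up/down operations transforming `ψ` into `ψ'`. -/
noncomputable def editDist {VP VH : Type*} [DecidableEq VP] (pP : VP → VP) (pH : VH → VH)
    (rH : VH) (m : VP → VH) (ψ ψ' : VP → VH) : ℕ :=
  sInf {n : ℕ | ∃ f : ℕ → VP → VH, f 0 = ψ ∧ f n = ψ' ∧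
    ∀ i < n, EditStep pP pH rH m (f i) (f (i + 1))}

/-- The median of a multiset of reals. -/
noncomputable def med (A : Multiset ℝ) : ℝ :=
  if A.card % 2 = 1 then (A.sort (· ≤ ·)).getD (A.card / 2) 0
  else ((A.sort (· ≤ ·)).getD (A.card / 2 - 1) 0 + (A.sort (· ≤ ·)).getD (A.card / 2) 0) / 2

/-- The median of a multiset of integers, rounded to the nearest integer (halves up). -/
noncomputable def zmed (A : Multiset ℤ) : ℤ :=
  round (med (A.map (fun z => (z : ℝ))))

theorem Anc.refl {V : Type*} (p : V → V) (u : V) : Anc p u u := ⟨0, rfl⟩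

theorem Anc.trans {V : Type*} {p : V → V} {u v w : V} (huv : Anc p u v) (hvw : Anc p v w) :
    Anc p u w := by
  obtain ⟨n, rfl⟩ := huv
  obtain ⟨k, rfl⟩ := hvw
  exact ⟨n + k, Function.iterate_add_apply p n k w⟩

theorem Anc.total_of_anc {V : Type*} {p : V → V} {u w x : V} (hu : Anc p u x) (hw : Anc p w x) :
    Anc p u w ∨ Anc p w u := by
  obtain ⟨n, rfl⟩ := hu
  obtain ⟨k, rfl⟩ := hw
  rcases le_total n k with hnk | hkn
  · exact Or.inr ⟨k - n, by rw [← Function.iterate_add_apply, Nat.sub_add_cancel hnk]⟩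
  · exact Or.inl ⟨n - k, by rw [← Function.iterate_add_apply, Nat.sub_add_cancel hkn]⟩

namespace IsRecon

variable {VP VH : Type*} {pP : VP → VP} {pH : VH → VH} {φ ψ : VP → VH}

theorem anc_parent (hψ : IsRecon pP pH φ ψ) (x : VP) : Anc pH (ψ (pP x)) (ψ x) := by
  by_cases hroot : pP x = x
  · rw [hroot]
    exact Anc.refl pH (ψ x)
  · exact hψ.2 (pP x) x ⟨rfl, fun h => hroot h.symm⟩

theorem anc_of_anc (hψ : IsRecon pP pH φ ψ) {u x : VP} (hux : Anc pP u x) :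
    Anc pH (ψ u) (ψ x) := by
  obtain ⟨n, rfl⟩ := hux
  induction n with
  | zero => exact Anc.refl pH (ψ x)
  | succ n ih =>
    rw [Function.iterate_succ_apply']
    exact (hψ.anc_parent _).trans ih

theorem anc_lca (hψ : IsRecon pP pH φ ψ) {v : VP} {w : VH}
    (hw : IsLCA pH {h | ∃ x, IsLeaf pP x ∧ Anc pP v x ∧ φ x = h} w) : Anc pH (ψ v) w := by
  refine hw.2 (ψ v) ?_
  rintro _ ⟨x, hx, hvx, rfl⟩
  rw [← hψ.1 x hx]
  exact hψ.anc_of_anc hvx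

theorem anc_total {ψ' : VP → VH} (hψ : IsRecon pP pH φ ψ) (hψ' : IsRecon pP pH φ ψ') {v : VP}
    {w : VH} (hw : IsLCA pH {h | ∃ x, IsLeaf pP x ∧ Anc pP v x ∧ φ x = h} w) :
    Anc pH (ψ v) (ψ' v) ∨ Anc pH (ψ' v) (ψ v) :=
  (hψ.anc_lca hw).total_of_anc (hψ'.anc_lca hw)

end IsRecon

theorem stmt3_general {VP VH : Type*} (pP : VP → VP) (pH : VH → VH)
    (φ : VP → VH)
    (m : VP → VH)
    (hm : ∀ v, IsLCA pH {h | ∃ x, IsLeaf pP x ∧ Anc pP v x ∧ φ x = h} (m v))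
    (ψ ψ' : VP → VH) (hψ : IsRecon pP pH φ ψ) (hψ' : IsRecon pP pH φ ψ') (v : VP) :
    (Anc pH (ψ v) (ψ' v) ∨ Anc pH (ψ' v) (ψ v)) ∧
    ∀ (l : ℕ) (Ψ : Fin l → VP → VH), (∀ i, IsRecon pP pH φ (Ψ i)) →
      ∀ i j, Anc pH (Ψ i v) (Ψ j v) ∨ Anc pH (Ψ j v) (Ψ i v) :=
  ⟨hψ.anc_total hψ' (hm v), fun _ _ hΨ i j => (hΨ i).anc_total (hΨ j) (hm v)⟩

theorem stmt3 {VP VH : Type*} (pP : VP → VP) (pH : VH → VH) (rP : VP) (rH : VH)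
    (dpP : VP → ℕ) (dpH : VH → ℕ)
    (hP : IsRootedTree pP rP dpP) (hH : IsRootedTree pH rH dpH)
    (hbP : IsBinary pP) (hbH : IsBinary pH)
    (φ : VP → VH) (hφ : ∀ x, IsLeaf pP x → IsLeaf pH (φ x))
    (m : VP → VH)
    (hm : ∀ v, IsLCA pH {h | ∃ x, IsLeaf pP x ∧ Anc pP v x ∧ φ x = h} (m v))
    (ψ ψ' : VP → VH) (hψ : IsRecon pP pH φ ψ) (hψ' : IsRecon pP pH φ ψ') (v : VP) :
    (Anc pH (ψ v) (ψ' v) ∨ Anc pH (ψ' v) (ψ v)) ∧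
    ∀ (l : ℕ) (Ψ : Fin l → VP → VH), (∀ i, IsRecon pP pH φ (Ψ i)) →
      ∀ i j, Anc pH (Ψ i v) (Ψ j v) ∨ Anc pH (Ψ j v) (Ψ i v) :=
  stmt3_general pP pH φ m hm ψ ψ' hψ hψ' v

end Recon
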